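/- Let (Ω,ρ) be a compact connected metric space in which every nonempty ball has positive K-capacity, σ a fully supported probability measure, and K a symmetric extended-continuous kernel that is regular and entirely strictly subharmonic with respect to σ. Then every energy-minimizing Borel probability measure μ for I_K has full support, supp(μ) = Ω. -/

import Mathlib

open MeasureTheory Metric Set ENNReal

/-- The potential of a measure `μ` with respect to a kernel `K`. -/
noncomputable def pot {Ω : Type*} [MeasurableSpace Ω] (K : Ω → Ω → ℝ≥0∞)
    (μ : Measure Ω) (x : Ω) : ℝ≥0∞ := ∫⁻ y, K x y ∂μ

/-- The energy of a measure `μ` with respect to a kernel `K`. -/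
noncomputable def energy {Ω : Type*} [MeasurableSpace Ω] (K : Ω → Ω → ℝ≥0∞)
    (μ : Measure Ω) : ℝ≥0∞ := ∫⁻ x, ∫⁻ y, K x y ∂μ ∂μ

/-- The support of a Borel measure. -/
def msupp {Ω : Type*} [TopologicalSpace Ω] [MeasurableSpace Ω] (μ : Measure Ω) : Set Ω :=
  {x | ∀ V : Set Ω, IsOpen V → x ∈ V → 0 < μ V}

/-- A set has `K`-capacity zero if every probability measure supported in it has
infinite `K`-energy. -/
def CapacityZero {Ω : Type*} [TopologicalSpace Ω] [MeasurableSpace Ω]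
    (K : Ω → Ω → ℝ≥0∞) (E : Set Ω) : Prop :=
  ∀ ν : Measure Ω, IsProbabilityMeasure ν → msupp ν ⊆ E → energy K ν = ⊤

/-- A probability measure `μ` is approximately `K`-invariant if it has finite energy and
its potential equals a finite constant `M` outside a set of `K`-capacity zero. -/
def ApproxInvariant {Ω : Type*} [TopologicalSpace Ω] [MeasurableSpace Ω]
    (K : Ω → Ω → ℝ≥0∞) (μ : Measure Ω) : Prop :=
  IsProbabilityMeasure μ ∧ energy K μ ≠ ⊤ ∧
    ∃ M : ℝ≥0∞, M ≠ ⊤ ∧ CapacityZero K {x | pot K μ x ≠ M}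

/-- `K` is regular. -/
def Regular {Ω : Type*} [TopologicalSpace Ω] [MeasurableSpace Ω] (K : Ω → Ω → ℝ≥0∞) : Prop :=
  ∀ ν : Measure Ω, IsFiniteMeasure ν →
    ContinuousOn (pot K ν) (msupp ν) → (∀ x ∈ msupp ν, pot K ν x ≠ ⊤) →
    Continuous (pot K ν) ∧ ∀ x, pot K ν x ≠ ⊤

/-- `K` is entirely strictly subharmonic with respect to `σ`. -/
def EntirelyStrictlySubharmonic {Ω : Type*} [MetricSpace Ω] [MeasurableSpace Ω]
    (σ : Measure Ω) (K : Ω → Ω → ℝ≥0∞) : Prop :=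
  ∃ R > (0 : ℝ), ∀ y : Ω,
    (∀ x, x ≠ y → K x y ≠ ⊤) ∧
    ∀ (x₀ : Ω) (r : ℝ), 0 < r → r < R → closedBall x₀ r ⊆ {y}ᶜ →
      K x₀ y < (∫⁻ z in closedBall x₀ r, K z y ∂σ) / σ (closedBall x₀ r)

/-!
Write `U = pot K μ` and `I = energy K μ`. Comparing `μ` with `(1 - t) μ + t ν` and letting
`t → 0` gives `I ≤ ∫ U dν` for every probability measure `ν` of finite energy; applied to
normalized restrictions of `μ`, this forces `U = I` `μ`-almost everywhere. On a compact piece `F` of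
the level set `{U = I}`, the potential of `μ|_F` is continuous on `F`, since it is `I` minus the
lower semicontinuous potential of `μ|_{Fᶜ}`; by regularity it is continuous everywhere, and by
strict subharmonicity a potential has no maximum off the support of its measure, so it is at most
`I`. Exhausting `{U = I}` by compact sets gives `U ≤ I` everywhere. Finally, if a ball missed the
support of `μ`, a finite-energy probability measure carried by a smaller ball would force `U = I`
somewhere in it: a maximum of `U` off the support of `μ`.
-/

open Function Filter Topology ProbabilityTheory
open scoped NNReal

theorem msupp_eq_support {Ω : Type*} [TopologicalSpace Ω] [MeasurableSpace Ω] (μ : Measure Ω) :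
    msupp μ = μ.support := by
  simp only [msupp, Measure.support_eq_forall_isOpen]
  grind

theorem le_of_forall_le_quadratic_mix {i j e : ℝ}
    (h : ∀ t ∈ Ioc (0 : ℝ) 1, i ≤ (1 - t) ^ 2 * i + 2 * (1 - t) * t * j + t ^ 2 * e) :
    i ≤ j := by
  have hslope : ∀ t ∈ Ioc (0 : ℝ) 1, 2 * (i - j) ≤ t * (i - 2 * j + e) := fun t ht =>
    le_of_mul_le_mul_left (by nlinarith [h t ht]) ht.1
  have hlim : Tendsto (fun t : ℝ => t * (i - 2 * j + e)) (𝓝[>] 0) (𝓝 0) := by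
    simpa using ((tendsto_id (x := 𝓝 (0 : ℝ))).mul_const (i - 2 * j + e)).mono_left
      nhdsWithin_le_nhds
  have hij := ge_of_tendsto hlim (eventually_of_mem (Ioc_mem_nhdsGT one_pos) hslope)
  linarith

section Energy

variable {Ω : Type*} [MeasurableSpace Ω] {K : Ω → Ω → ℝ≥0∞}

theorem measurable_pot (hK : Measurable (uncurry K)) (μ : Measure Ω) [SFinite μ] :
    Measurable (pot K μ) :=
  hK.lintegral_prod_right'

theorem lintegral_pot_comm (hK : Measurable (uncurry K)) (hsym : ∀ x y, K x y = K y x)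
    (μ ν : Measure Ω) [SFinite μ] [SFinite ν] :
    ∫⁻ x, pot K μ x ∂ν = ∫⁻ x, pot K ν x ∂μ := by
  simp only [pot]
  rw [lintegral_lintegral_swap hK.aemeasurable]
  simp only [hsym]

theorem pot_smul (c : ℝ≥0∞) (μ : Measure Ω) (x : Ω) : pot K (c • μ) x = c * pot K μ x :=
  lintegral_smul_measure c _

theorem energy_smul {c : ℝ≥0∞} (hc : c ≠ ⊤) (μ : Measure Ω) :
    energy K (c • μ) = c ^ 2 * energy K μ := by
  simp only [energy, lintegral_smul_measure, smul_eq_mul, lintegral_const_mul' c _ hc]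
  ring

theorem energy_add (hK : Measurable (uncurry K)) (hsym : ∀ x y, K x y = K y x)
    (μ ν : Measure Ω) [SFinite μ] [SFinite ν] :
    energy K (μ + ν) = energy K μ + 2 * ∫⁻ x, pot K μ x ∂ν + energy K ν := by
  have hsplit : ∀ ρ : Measure Ω, ∫⁻ x, pot K (μ + ν) x ∂ρ =
      ∫⁻ x, pot K μ x ∂ρ + ∫⁻ x, pot K ν x ∂ρ := fun ρ => by
    simp only [pot, lintegral_add_measure]
    exact lintegral_add_left (measurable_pot hK μ) _
  change ∫⁻ x, pot K (μ + ν) x ∂(μ + ν) = _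
  rw [lintegral_add_measure, hsplit, hsplit, lintegral_pot_comm hK hsym ν μ]
  simp only [energy, pot]
  ring

theorem energy_mono {μ ν : Measure Ω} (h : μ ≤ ν) : energy K μ ≤ energy K ν :=
  lintegral_mono' h fun _ => lintegral_mono' h le_rfl

theorem energy_smul_add_smul (hK : Measurable (uncurry K)) (hsym : ∀ x y, K x y = K y x)
    (μ ν : Measure Ω) [SFinite μ] [SFinite ν] (a b : ℝ≥0) :
    energy K ((a : ℝ≥0∞) • μ + (b : ℝ≥0∞) • ν) = a ^ 2 * energy K μ +
      2 * a * b * ∫⁻ x, pot K μ x ∂ν + b ^ 2 * energy K ν := by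
  rw [energy_add hK hsym, energy_smul coe_ne_top, energy_smul coe_ne_top]
  simp only [pot_smul, lintegral_smul_measure, smul_eq_mul, lintegral_const_mul' _ _ coe_ne_top]
  ring

theorem energy_le_lintegral_pot_of_isMinimizer (hK : Measurable (uncurry K))
    (hsym : ∀ x y, K x y = K y x) {μ ν : Measure Ω} [IsProbabilityMeasure μ]
    [IsProbabilityMeasure ν]
    (hmin : ∀ ν : Measure Ω, IsProbabilityMeasure ν → energy K μ ≤ energy K ν)
    (hν : energy K ν ≠ ⊤) : energy K μ ≤ ∫⁻ x, pot K μ x ∂ν := by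
  have hμ : energy K μ ≠ ⊤ := ne_top_of_le_ne_top hν (hmin ν inferInstance)
  have hmix : ∀ t : ℝ≥0, t ≤ 1 → energy K μ ≤ ((1 - t) ^ 2 : ℝ≥0) * energy K μ +
      (2 * (1 - t) * t : ℝ≥0) * ∫⁻ x, pot K μ x ∂ν + (t ^ 2 : ℝ≥0) * energy K ν := by
    intro t ht
    have : IsProbabilityMeasure (((1 - t : ℝ≥0) : ℝ≥0∞) • μ + (t : ℝ≥0∞) • ν) := by
      constructor
      simp [tsub_add_cancel_of_le (ENNReal.coe_le_one_iff.2 ht)]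
    simpa using (hmin _ this).trans_eq (energy_smul_add_smul hK hsym μ ν (1 - t) t)
  rcases eq_or_ne (∫⁻ x, pot K μ x ∂ν) ⊤ with hJ | hJ
  · simp [hJ]
  lift energy K μ to ℝ≥0 using hμ with i
  lift energy K ν to ℝ≥0 using hν with e
  lift ∫⁻ x, pot K μ x ∂ν to ℝ≥0 using hJ with j
  norm_cast at hmix ⊢
  rw [← NNReal.coe_le_coe]
  refine le_of_forall_le_quadratic_mix (e := e) fun t ht => ?_
  lift t to ℝ≥0 using ht.1.le
  have ht1 : t ≤ 1 := by exact_mod_cast ht.2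
  simpa [NNReal.coe_sub ht1] using NNReal.coe_le_coe.2 (hmix t ht1)

theorem energy_cond_ne_top {μ : Measure Ω} {E : Set Ω} (hE : μ E ≠ 0) (hμ : energy K μ ≠ ⊤) :
    energy K μ[|E] ≠ ⊤ := by
  rw [ProbabilityTheory.cond, energy_smul (inv_ne_top.2 hE)]
  exact mul_ne_top (pow_ne_top (inv_ne_top.2 hE))
    (ne_top_of_le_ne_top hμ (energy_mono Measure.restrict_le_self))

theorem ae_pot_eq_energy_of_isMinimizer (hK : Measurable (uncurry K))
    (hsym : ∀ x y, K x y = K y x) {μ : Measure Ω} [IsProbabilityMeasure μ]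
    (hmin : ∀ ν : Measure Ω, IsProbabilityMeasure ν → energy K μ ≤ energy K ν)
    (hμ : energy K μ ≠ ⊤) : ∀ᵐ x ∂μ, pot K μ x = energy K μ := by
  have hge : ∀ᵐ x ∂μ, energy K μ ≤ pot K μ x := by
    set E := {x | pot K μ x < energy K μ}
    suffices μ E = 0 by simpa [ae_iff, E] using this
    by_contra hE
    have := cond_isProbabilityMeasure hE
    have hle := energy_le_lintegral_pot_of_isMinimizer hK hsym hmin (energy_cond_ne_top hE hμ)
    have hEm : MeasurableSet E := measurableSet_lt (measurable_pot hK μ) measurable_const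
    have hinv : (μ E)⁻¹ ≠ 0 := ENNReal.inv_ne_zero.2 (measure_ne_top μ E)
    have hlt : ∫⁻ x in E, pot K μ x ∂μ < ∫⁻ _ in E, energy K μ ∂μ :=
      setLIntegral_strict_mono hEm hE measurable_const
        (ne_top_of_le_ne_top hμ (setLIntegral_le_lintegral E _))
        (ae_of_all _ fun x hx => hx)
    have hcond : ∫⁻ x, pot K μ x ∂μ[|E] < energy K μ := by
      rw [ProbabilityTheory.cond, lintegral_smul_measure, smul_eq_mul]
      calc (μ E)⁻¹ * ∫⁻ x in E, pot K μ x ∂μ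
          < (μ E)⁻¹ * ∫⁻ _ in E, energy K μ ∂μ :=
            ENNReal.mul_lt_mul_right hinv (inv_ne_top.2 hE) hlt
        _ = energy K μ := by
            rw [setLIntegral_const, mul_comm, mul_assoc, ENNReal.mul_inv_cancel hE
              (measure_ne_top μ E), mul_one]
    exact hle.not_gt hcond
  refine (ae_eq_of_ae_le_of_lintegral_le hge (by simpa using hμ)
    (measurable_pot hK μ).aemeasurable ?_).symm
  simp [energy, pot]

end Energy

theorem ContinuousOn.of_add_eq_const {X : Type*} [TopologicalSpace X] {f g : X → ℝ≥0∞}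
    {F : Set X} {c : ℝ≥0∞} (hc : c ≠ ⊤) (hf : LowerSemicontinuous f)
    (hg : LowerSemicontinuous g) (hfg : ∀ x ∈ F, f x + g x = c) : ContinuousOn f F := by
  refine continuousOn_iff_lower_upperSemicontinuousOn.2 ⟨hf.lowerSemicontinuousOn F, ?_⟩
  have hsub : UpperSemicontinuousOn (fun x => c - g x) F :=
    ((continuous_sub_left hc).comp_lowerSemicontinuous_antitone hg
      fun _ _ h => tsub_le_tsub_left h c).upperSemicontinuousOn F
  have heq : ∀ x ∈ F, f x = c - g x := fun x hx => ENNReal.eq_sub_of_add_eq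
    (ne_top_of_le_ne_top hc (le_add_self.trans (hfg x hx).le)) (hfg x hx)
  intro x hx y hy
  filter_upwards [hsub x hx y (by simpa [heq x hx] using hy), self_mem_nhdsWithin] with x' h hx'
  simpa [heq x' hx'] using h

theorem lowerSemicontinuous_pot {Ω : Type*} [TopologicalSpace Ω] [FirstCountableTopology Ω]
    [MeasurableSpace Ω] [OpensMeasurableSpace Ω] {K : Ω → Ω → ℝ≥0∞}
    (hK : Continuous (uncurry K)) (μ : Measure Ω) : LowerSemicontinuous (pot K μ) := by
  refine lowerSemicontinuous_iff_le_liminf.2 fun x => ?_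
  calc pot K μ x = ∫⁻ y, liminf (fun x' => K x' y) (𝓝 x) ∂μ := by
        refine lintegral_congr fun y => ?_
        exact ((hK.comp (continuous_id.prodMk continuous_const)).tendsto x).liminf_eq.symm
    _ ≤ liminf (pot K μ) (𝓝 x) :=
        lintegral_liminf_le fun x' => (hK.comp (Continuous.prodMk_right x')).measurable

theorem lintegral_le_of_forall_isCompact_setLIntegral_le {X : Type*} [TopologicalSpace X]
    [MeasurableSpace X] [OpensMeasurableSpace X] [T2Space X] {μ : Measure X} [IsFiniteMeasure μ]
    [μ.InnerRegularCompactLTTop] {S : Set X} (hS : MeasurableSet S) (hSμ : ∀ᵐ x ∂μ, x ∈ S)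
    (f : X → ℝ≥0∞) {c : ℝ≥0∞} (h : ∀ F ⊆ S, IsCompact F → ∫⁻ x in F, f x ∂μ ≤ c) :
    ∫⁻ x, f x ∂μ ≤ c := by
  have hF : ∀ n : ℕ, ∃ F ⊆ S, IsCompact F ∧ μ (S \ F) < (n : ℝ≥0∞)⁻¹ := fun n =>
    hS.exists_isCompact_sdiff_lt (measure_ne_top μ S) (ENNReal.inv_ne_zero.2 (natCast_ne_top n))
  choose F hFS hFc hFμ using hF
  have hnull : μ (S \ ⋃ n, F n) = 0 := le_zero_iff.1 <|
    ge_of_tendsto' ENNReal.tendsto_inv_nat_nhds_zero fun n =>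
      (measure_mono (sdiff_subset_sdiff_right (subset_iUnion F n))).trans (hFμ n).le
  have hcover : ∀ᵐ x ∂μ, x ∈ ⋃ n, accumulate F n := by
    filter_upwards [hSμ, measure_eq_zero_iff_ae_notMem.1 hnull] with x hxS hx
    rw [iUnion_accumulate]
    by_contra hxF
    exact hx ⟨hxS, hxF⟩
  calc ∫⁻ x, f x ∂μ = ∫⁻ x in ⋃ n, accumulate F n, f x ∂μ := by
        rw [Measure.restrict_eq_self_of_ae_mem hcover]
    _ = ⨆ n, ∫⁻ x in accumulate F n, f x ∂μ :=
        setLIntegral_iUnion_of_directed f monotone_accumulate.directed_le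
    _ ≤ c := iSup_le fun n =>
        h _ ((accumulate_subset_iUnion n).trans (iUnion_subset hFS)) (isCompact_accumulate hFc n)

section Subharmonic

variable {Ω : Type*} [MetricSpace Ω] [MeasurableSpace Ω] {σ : Measure Ω} [IsFiniteMeasure σ]
  {K : Ω → Ω → ℝ≥0∞}

theorem EntirelyStrictlySubharmonic.not_isMaxOn_pot (hsub : EntirelyStrictlySubharmonic σ K)
    (hσ : ∀ (x : Ω) (r : ℝ), 0 < r → 0 < σ (closedBall x r))
    (hK : Measurable (uncurry K)) {ρ : Measure Ω} [SFinite ρ] (hρ : ρ ≠ 0) {x : Ω}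
    (hx : x ∉ ρ.support) (hfin : pot K ρ x ≠ ⊤) : ¬ IsMaxOn (pot K ρ) univ x := by
  intro hmax
  obtain ⟨R, hR, hKR⟩ := hsub
  obtain ⟨U, hU, hρU⟩ := Measure.notMem_support_iff_exists.1 hx
  obtain ⟨ε, hε, hεU⟩ := Metric.mem_nhds_iff.1 hU
  set r := min (ε / 2) (R / 2)
  have hr : 0 < r := by positivity
  have hrR : r < R := (min_le_right _ _).trans_lt (half_lt_self hR)
  have hBU : closedBall x r ⊆ U :=
    (closedBall_subset_ball ((min_le_left _ _).trans_lt (half_lt_self hε))).trans hεU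
  set B := closedBall x r
  have hσB : σ B ≠ 0 := (hσ x r hr).ne'
  have hKswap : Measurable (uncurry fun y z => K z y) := hK.comp measurable_swap
  have hlt : pot K ρ x < ∫⁻ y, (∫⁻ z in B, K z y ∂σ) / σ B ∂ρ := by
    refine lintegral_strict_mono hρ (hKswap.lintegral_prod_right'.div_const _).aemeasurable
      hfin ?_
    filter_upwards [measure_eq_zero_iff_ae_notMem.1 hρU] with y hy
    exact (hKR y).2 x r hr hrR fun z hz hzy => hy (hzy ▸ hBU hz)
  have hle : ∫⁻ y, (∫⁻ z in B, K z y ∂σ) / σ B ∂ρ ≤ pot K ρ x := calc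
    _ = (∫⁻ z in B, pot K ρ z ∂σ) / σ B := by
        simp only [div_eq_mul_inv]
        rw [lintegral_mul_const' _ _ (inv_ne_top.2 hσB),
          lintegral_lintegral_swap hKswap.aemeasurable]
        rfl
    _ ≤ (pot K ρ x * σ B) / σ B := by
        gcongr
        exact (setLIntegral_mono measurable_const fun z _ => hmax (mem_univ z)).trans_eq
          (setLIntegral_const B _)
    _ = pot K ρ x := ENNReal.mul_div_cancel_right hσB (measure_ne_top σ B)
  exact hlt.not_ge hle

theorem Regular.pot_le_of_le_on_support [CompactSpace Ω] (hreg : Regular K)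
    (hsub : EntirelyStrictlySubharmonic σ K)
    (hσ : ∀ (x : Ω) (r : ℝ), 0 < r → 0 < σ (closedBall x r)) (hK : Measurable (uncurry K))
    {ρ : Measure Ω} [IsFiniteMeasure ρ] {M : ℝ≥0∞} (hM : M ≠ ⊤)
    (hcont : ContinuousOn (pot K ρ) ρ.support) (hle : ∀ x ∈ ρ.support, pot K ρ x ≤ M)
    (x : Ω) : pot K ρ x ≤ M := by
  rcases eq_or_ne ρ 0 with rfl | hρ
  · simp [pot]
  obtain ⟨hc, hfin⟩ := hreg ρ inferInstance (by rwa [msupp_eq_support]) fun y hy =>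
    ne_top_of_le_ne_top hM (hle y (by rwa [← msupp_eq_support]))
  obtain ⟨x₀, -, hx₀⟩ := isCompact_univ.exists_isMaxOn ⟨x, mem_univ x⟩ hc.continuousOn
  refine (hx₀ (mem_univ x)).trans (by_contra fun hgt => ?_)
  have hx₀ρ : x₀ ∉ ρ.support := fun h => hgt (hle x₀ h)
  exact hsub.not_isMaxOn_pot hσ hK hρ hx₀ρ (hfin x₀) hx₀

theorem pot_restrict_le_of_forall_pot_eq [CompactSpace Ω] [BorelSpace Ω] (hreg : Regular K)
    (hsub : EntirelyStrictlySubharmonic σ K)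
    (hσ : ∀ (x : Ω) (r : ℝ), 0 < r → 0 < σ (closedBall x r)) (hK : Continuous (uncurry K))
    {μ : Measure Ω} [IsFiniteMeasure μ] {I : ℝ≥0∞} (hI : I ≠ ⊤) {F : Set Ω} (hF : IsClosed F)
    (hFI : ∀ y ∈ F, pot K μ y = I) (x : Ω) : pot K (μ.restrict F) x ≤ I := by
  have hsplit : ∀ y, pot K (μ.restrict F) y + pot K (μ.restrict Fᶜ) y = pot K μ y :=
    fun y => lintegral_add_compl _ hF.measurableSet
  have hsupp : (μ.restrict F).support ⊆ F :=
    Measure.support_restrict_subset.trans (inter_subset_left.trans hF.closure_subset)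
  have hcont : ContinuousOn (pot K (μ.restrict F)) F :=
    ContinuousOn.of_add_eq_const hI (lowerSemicontinuous_pot hK _)
      (lowerSemicontinuous_pot hK _) fun y hy => (hsplit y).trans (hFI y hy)
  refine hreg.pot_le_of_le_on_support hsub hσ hK.measurable hI (hcont.mono hsupp)
    (fun y hy => ?_) x
  rw [← hFI y (hsupp hy), ← hsplit y]
  exact le_self_add

theorem pot_le_of_ae_pot_eq [CompactSpace Ω] [BorelSpace Ω] (hreg : Regular K)
    (hsub : EntirelyStrictlySubharmonic σ K)
    (hσ : ∀ (x : Ω) (r : ℝ), 0 < r → 0 < σ (closedBall x r)) (hK : Continuous (uncurry K))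
    {μ : Measure Ω} [IsFiniteMeasure μ] {I : ℝ≥0∞} (hI : I ≠ ⊤)
    (hae : ∀ᵐ y ∂μ, pot K μ y = I) (x : Ω) : pot K μ x ≤ I :=
  lintegral_le_of_forall_isCompact_setLIntegral_le
    (measurable_pot hK.measurable μ (measurableSet_singleton I)) hae (K x) fun _ hFI hF =>
      pot_restrict_le_of_forall_pot_eq hreg hsub hσ hK hI hF.isClosed hFI x

end Subharmonic

theorem exists_mem_support_pot_eq_energy {Ω : Type*} [TopologicalSpace Ω]
    [HereditarilyLindelofSpace Ω] [MeasurableSpace Ω] {K : Ω → Ω → ℝ≥0∞}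
    (hK : Measurable (uncurry K)) (hsym : ∀ x y, K x y = K y x) {μ : Measure Ω}
    [IsProbabilityMeasure μ]
    (hmin : ∀ ν : Measure Ω, IsProbabilityMeasure ν → energy K μ ≤ energy K ν)
    (hle : ∀ x, pot K μ x ≤ energy K μ) {ν : Measure Ω} [IsProbabilityMeasure ν]
    (hν : energy K ν ≠ ⊤) : ∃ x ∈ ν.support, pot K μ x = energy K μ := by
  have hμ : energy K μ ≠ ⊤ := ne_top_of_le_ne_top hν (hmin ν inferInstance)
  have hae : ∀ᵐ x ∂ν, pot K μ x = energy K μ :=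
    ae_eq_of_ae_le_of_lintegral_le (ae_of_all _ hle)
      (ne_top_of_le_ne_top hμ ((lintegral_mono hle).trans_eq (by simp))) aemeasurable_const
      (by simpa using energy_le_lintegral_pot_of_isMinimizer hK hsym hmin hν)
  obtain ⟨x, hx, hxν⟩ := (hae.and Measure.support_mem_ae).exists
  exact ⟨x, hxν, hx⟩

theorem minimizer_full_support_general
    {Ω : Type*} [MetricSpace Ω] [CompactSpace Ω]
    [MeasurableSpace Ω] [BorelSpace Ω]
    (σ : Measure Ω) [IsProbabilityMeasure σ]
    (hσfull : ∀ (x : Ω) (r : ℝ), 0 < r → 0 < σ (closedBall x r))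
    (K : Ω → Ω → ℝ≥0∞) (hsym : ∀ x y, K x y = K y x)
    (hKcont : Continuous (Function.uncurry K))
    (hreg : Regular K) (hsubh : EntirelyStrictlySubharmonic σ K)
    (hballcap : ∀ (x : Ω) (r : ℝ), 0 < r → ∃ ν : Measure Ω, IsProbabilityMeasure ν ∧
      msupp ν ⊆ closedBall x r ∧ energy K ν ≠ ⊤)
    (μ : Measure Ω) [IsProbabilityMeasure μ]
    (hmin : ∀ ν : Measure Ω, IsProbabilityMeasure ν → energy K μ ≤ energy K ν) :
    msupp μ = Set.univ := by
  have hKm : Measurable (uncurry K) := hKcont.measurable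
  rw [msupp_eq_support, eq_univ_iff_forall]
  intro x₀
  by_contra hx₀
  obtain ⟨ε, hε, hεμ⟩ := Metric.isOpen_iff.1 Measure.isOpen_compl_support x₀ hx₀
  obtain ⟨ν, hν, hνsupp, hνE⟩ := hballcap x₀ (ε / 2) (half_pos hε)
  have hI : energy K μ ≠ ⊤ := ne_top_of_le_ne_top hνE (hmin ν hν)
  have hle := pot_le_of_ae_pot_eq hreg hsubh hσfull hKcont hI
    (ae_pot_eq_energy_of_isMinimizer hKm hsym hmin hI)
  obtain ⟨x₁, hx₁ν, hx₁⟩ := exists_mem_support_pot_eq_energy hKm hsym hmin hle hνE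
  rw [← msupp_eq_support] at hx₁ν
  have hx₁μ : x₁ ∉ μ.support := hεμ (closedBall_subset_ball (half_lt_self hε) (hνsupp hx₁ν))
  exact hsubh.not_isMaxOn_pot hσfull hKm (IsProbabilityMeasure.ne_zero μ) hx₁μ (hx₁ ▸ hI)
    fun y _ => hx₁ ▸ hle y

/-- For a regular, entirely strictly subharmonic, symmetric extended-continuous kernel on
a compact connected metric space in which every nonempty ball has positive capacity,
every energy-minimizing probability measure has full support. -/
theorem minimizer_full_support
    {Ω : Type*} [MetricSpace Ω] [CompactSpace Ω] [ConnectedSpace Ω]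
    [MeasurableSpace Ω] [BorelSpace Ω]
    (σ : Measure Ω) [IsProbabilityMeasure σ]
    (hσfull : ∀ (x : Ω) (r : ℝ), 0 < r → 0 < σ (closedBall x r))
    (K : Ω → Ω → ℝ≥0∞) (hsym : ∀ x y, K x y = K y x)
    (hKcont : Continuous (Function.uncurry K))
    (hreg : Regular K) (hsubh : EntirelyStrictlySubharmonic σ K)
    (hballcap : ∀ (x : Ω) (r : ℝ), 0 < r → ∃ ν : Measure Ω, IsProbabilityMeasure ν ∧
      msupp ν ⊆ closedBall x r ∧ energy K ν ≠ ⊤)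
    (μ : Measure Ω) [IsProbabilityMeasure μ]
    (hmin : ∀ ν : Measure Ω, IsProbabilityMeasure ν → energy K μ ≤ energy K ν) :
    msupp μ = Set.univ :=
  minimizer_full_support_general σ hσfull K hsym hKcont hreg hsubh hballcap μ hmin
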